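/- arXiv:0803.1678 — 2 statements merged into one kernel-verified Lean document; each statement's English description precedes it below -/
import Mathlib

section
/- Let g be a Lie algebra with inner product, V a g-module with action b and g-invariant inner product ⟨·,·⟩_V, and α ∈ Z¹(g,V) a 1-cocycle (α([X₁,X₂]) = b(X₁)α(X₂) − b(X₂)α(X₁)). Then ω((v₁,X₁),(v₂,X₂)) := ⟨α(X₁),v₂⟩_V − ⟨α(X₂),v₁⟩_V is a real-valued Lie algebra 2-cocycle on the semidirect product V ⋊ g. -/
open scoped InnerProductSpace

/-- Let `g` be a Lie algebra with inner product, `V` a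
`g`-module with action `b` and `g`-invariant inner product, and
`α ∈ Z¹(g,V)` a 1-cocycle. Then
`ω((v₁,X₁),(v₂,X₂)) = ⟪α(X₁),v₂⟫_V − ⟪α(X₂),v₁⟫_V` is a real-valued Lie
algebra 2-cocycle on the semidirect product `V ⋊ g`, whose bracket is
`[(v₁,X₁),(v₂,X₂)] = (b(X₁)v₂ − b(X₂)v₁, [X₁,X₂])`: it is skew-symmetric,
bilinear (being built from linear maps and the inner product), and its
cyclic sum on brackets vanishes. -/
theorem semidirect_cocycle_from_one_cocycle
    {g V : Type*} [LieRing g] [LieAlgebra ℝ g]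
    [NormedAddCommGroup g] [InnerProductSpace ℝ g] [FiniteDimensional ℝ g]
    [NormedAddCommGroup V] [InnerProductSpace ℝ V] [FiniteDimensional ℝ V]
    (b : g →ₗ[ℝ] Module.End ℝ V)
    (hb : ∀ X Y : g, b ⁅X, Y⁆ = b X * b Y - b Y * b X)
    (hinv : ∀ (X : g) (v₁ v₂ : V), ⟪b X v₁, v₂⟫_ℝ + ⟪v₁, b X v₂⟫_ℝ = 0)
    (α : g →ₗ[ℝ] V)
    (hα : ∀ X₁ X₂ : g, α ⁅X₁, X₂⁆ = b X₁ (α X₂) - b X₂ (α X₁))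
    (ω : (V × g) → (V × g) → ℝ)
    (hω : ∀ p q : V × g, ω p q = ⟪α p.2, q.1⟫_ℝ - ⟪α q.2, p.1⟫_ℝ)
    (br : (V × g) → (V × g) → (V × g))
    (hbr : ∀ p q : V × g, br p q = (b p.2 q.1 - b q.2 p.1, ⁅p.2, q.2⁆)) :
    (∀ p q : V × g, ω p q = -ω q p) ∧
    (∀ p q r : V × g, ω (br p q) r + ω (br q r) p + ω (br r p) q = 0) := by
  constructor
  · intro p q
    simp only [hω]; ring
  · intro p q r
    have key : ∀ (X : g) (u w : V), ⟪b X u, w⟫_ℝ = -⟪u, b X w⟫_ℝ := by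
      intro X u w; linarith [hinv X u w]
    simp only [hω, hbr, hα, inner_sub_left, inner_sub_right, map_sub]
    linarith [key p.2 (α q.2) r.1, key q.2 (α p.2) r.1,
      key q.2 (α r.2) p.1, key r.2 (α q.2) p.1,
      key r.2 (α p.2) q.1, key p.2 (α r.2) q.1]
end

section
/- For smooth 1-periodic functions X,Y : ℝ → ℝ, the H¹ inner product satisfies ∫₀¹(XY + X'Y')dx = ∫₀¹ X(Y − Y'')dx. Moreover, for smooth 1-periodic X,Y,Z, ⟨Y,[X,Z]⟩_{H¹} = ∫₀¹ Z·(2YX' + Y'X − 2Y''X' − Y'''X)dx, where [X,Z] = X'Z − XZ' and ⟨f,g⟩_{H¹} = ∫₀¹(fg + f'g')dx. In particular, with u = Y = X, ⟨X,[X,Z]⟩_{H¹} = ∫₀¹ Z·(3XX' − 2X'X'' − XX''')dx, the right-hand side of the Camassa–Holm equation. -/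
open MeasureTheory intervalIntegral Function ContDiff

private lemma per_deriv' {f : ℝ → ℝ} (hfp : Function.Periodic f 1) :
    Function.Periodic (deriv f) 1 := by
  intro x
  have h : (fun y => f (y + 1)) = f := funext hfp
  calc deriv f (x + 1) = deriv (fun y => f (y + 1)) x := (deriv_comp_add_const f 1 x).symm
    _ = deriv f x := by rw [h]

private lemma smooth_deriv' {f : ℝ → ℝ} (hf : ContDiff ℝ (∞ : WithTop ℕ∞) f) :
    ContDiff ℝ (∞ : WithTop ℕ∞) (deriv f) :=
  (contDiff_infty_iff_deriv.mp hf).2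

private lemma diffble {f : ℝ → ℝ} (hf : ContDiff ℝ (∞ : WithTop ℕ∞) f) :
    Differentiable ℝ f :=
  (contDiff_infty_iff_deriv.mp hf).1

private lemma per_ibp' {f g : ℝ → ℝ} (hf : ContDiff ℝ (∞ : WithTop ℕ∞) f)
    (hg : ContDiff ℝ (∞ : WithTop ℕ∞) g)
    (hfp : Function.Periodic f 1) (hgp : Function.Periodic g 1) :
    ∫ x in (0:ℝ)..1, deriv f x * g x = -∫ x in (0:ℝ)..1, f x * deriv g x := by
  have hf' : Continuous (deriv f) := (smooth_deriv' hf).continuous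
  have hg' : Continuous (deriv g) := (smooth_deriv' hg).continuous
  have h := intervalIntegral.integral_deriv_mul_eq_sub (a := (0:ℝ)) (b := 1)
    (u := f) (v := g) (u' := deriv f) (v' := deriv g)
    (fun x _ => ((diffble hf) x).hasDerivAt)
    (fun x _ => ((diffble hg) x).hasDerivAt)
    (hf'.intervalIntegrable 0 1) (hg'.intervalIntegrable 0 1)
  rw [show f 1 = f 0 by simpa using hfp 0, show g 1 = g 0 by simpa using hgp 0, sub_self] at h
  rw [intervalIntegral.integral_add (f := fun x => deriv f x * g x) (g := fun x => f x * deriv g x) ((hf'.mul hg.continuous).intervalIntegrable 0 1)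
    ((hf.continuous.mul hg').intervalIntegrable 0 1)] at h
  linarith

/-- Integration-by-parts identities for the `H¹` scalar
product `⟨f,g⟩ = ∫₀¹ (fg + f'g')` on smooth 1-periodic functions:
`∫₀¹(XY + X'Y') = ∫₀¹ X(Y - Y'')`, and
`⟨Y,[X,Z]⟩_{H¹} = ∫₀¹ Z (2YX' + Y'X - 2Y''X' - Y'''X)` where
`[X,Z] = X'Z - XZ'`; in particular with `Y = X`,
`⟨X,[X,Z]⟩_{H¹} = ∫₀¹ Z (3XX' - 2X'X'' - XX''')`, the right-hand side of the
Camassa–Holm equation. -/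
theorem h1_adjoint_camassa_holm
    (X Y Z : ℝ → ℝ)
    (hX : ContDiff ℝ (⊤ : ℕ∞) X) (hY : ContDiff ℝ (⊤ : ℕ∞) Y) (hZ : ContDiff ℝ (⊤ : ℕ∞) Z)
    (hXp : Function.Periodic X 1) (hYp : Function.Periodic Y 1)
    (hZp : Function.Periodic Z 1) :
    (∫ x in (0:ℝ)..1, (X x * Y x + deriv X x * deriv Y x)
        = ∫ x in (0:ℝ)..1, X x * (Y x - deriv (deriv Y) x)) ∧
    ((∫ x in (0:ℝ)..1,
        (Y x * (deriv X x * Z x - X x * deriv Z x)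
          + deriv Y x * deriv (fun t => deriv X t * Z t - X t * deriv Z t) x))
      = ∫ x in (0:ℝ)..1, Z x *
          (2 * Y x * deriv X x + deriv Y x * X x
            - 2 * deriv (deriv Y) x * deriv X x - deriv (deriv (deriv Y)) x * X x)) ∧
    ((∫ x in (0:ℝ)..1,
        (X x * (deriv X x * Z x - X x * deriv Z x)
          + deriv X x * deriv (fun t => deriv X t * Z t - X t * deriv Z t) x))
      = ∫ x in (0:ℝ)..1, Z x *
          (3 * X x * deriv X x - 2 * deriv X x * deriv (deriv X) x
            - X x * deriv (deriv (deriv X)) x)) := by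
  replace hX : ContDiff ℝ (∞ : WithTop ℕ∞) X := hX.of_le (by simp)
  replace hY : ContDiff ℝ (∞ : WithTop ℕ∞) Y := hY.of_le (by simp)
  replace hZ : ContDiff ℝ (∞ : WithTop ℕ∞) Z := hZ.of_le (by simp)
  have part1 : ∀ f g : ℝ → ℝ, ContDiff ℝ (∞ : WithTop ℕ∞) f → ContDiff ℝ (∞ : WithTop ℕ∞) g →
      Function.Periodic f 1 → Function.Periodic g 1 →
      (∫ x in (0:ℝ)..1, (f x * g x + deriv f x * deriv g x)
        = ∫ x in (0:ℝ)..1, f x * (g x - deriv (deriv g) x)) := by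
    intro f g hf hg hfp hgp
    have h1 : ∫ x in (0:ℝ)..1, deriv f x * deriv g x
        = -∫ x in (0:ℝ)..1, f x * deriv (deriv g) x :=
      per_ibp' hf (smooth_deriv' hg) hfp (per_deriv' hgp)
    have hfc := hf.continuous
    have hgc := hg.continuous
    have hf' := (smooth_deriv' hf).continuous
    have hg' := (smooth_deriv' hg).continuous
    have hg'' := (smooth_deriv' (smooth_deriv' hg)).continuous
    rw [intervalIntegral.integral_add (f := fun x => f x * g x) (g := fun x => deriv f x * deriv g x) ((hfc.mul hgc).intervalIntegrable 0 1)
      ((hf'.mul hg').intervalIntegrable 0 1), h1]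
    rw [show (fun x => f x * (g x - deriv (deriv g) x))
        = fun x => f x * g x - f x * deriv (deriv g) x by ext x; ring]
    rw [intervalIntegral.integral_sub (f := fun x => f x * g x) (g := fun x => f x * deriv (deriv g) x) ((hfc.mul hgc).intervalIntegrable 0 1)
      ((hfc.mul hg'').intervalIntegrable 0 1)]
    ring
  have part2 : ∀ Y : ℝ → ℝ, ContDiff ℝ (∞ : WithTop ℕ∞) Y → Function.Periodic Y 1 →
      ((∫ x in (0:ℝ)..1,
        (Y x * (deriv X x * Z x - X x * deriv Z x)
          + deriv Y x * deriv (fun t => deriv X t * Z t - X t * deriv Z t) x))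
      = ∫ x in (0:ℝ)..1, Z x *
          (2 * Y x * deriv X x + deriv Y x * X x
            - 2 * deriv (deriv Y) x * deriv X x - deriv (deriv (deriv Y)) x * X x)) := by
    intro Y hY hYp
    set W : ℝ → ℝ := fun t => deriv X t * Z t - X t * deriv Z t with hWdef
    have hX' := smooth_deriv' hX
    have hZ' := smooth_deriv' hZ
    have hW : ContDiff ℝ (∞ : WithTop ℕ∞) W := (hX'.mul hZ).sub (hX.mul hZ')
    have hWp : Function.Periodic W 1 := fun x => by
      simp only [W, per_deriv' hXp x, per_deriv' hZp x, hXp x, hZp x]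
    have hY' := smooth_deriv' hY
    have hY'' := smooth_deriv' hY'
    have hW' := smooth_deriv' hW
    have step1 : (∫ x in (0:ℝ)..1, (Y x * W x + deriv Y x * deriv W x))
        = ∫ x in (0:ℝ)..1, (Y x - deriv (deriv Y) x) * W x := by
      have h1 : ∫ x in (0:ℝ)..1, deriv (deriv Y) x * W x
          = -∫ x in (0:ℝ)..1, deriv Y x * deriv W x :=
        per_ibp' hY' hW (per_deriv' hYp) hWp
      rw [intervalIntegral.integral_add (f := fun x => Y x * W x) (g := fun x => deriv Y x * deriv W x)
        ((hY.continuous.mul hW.continuous).intervalIntegrable 0 1)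
        ((hY'.continuous.mul hW'.continuous).intervalIntegrable 0 1)]
      rw [show (fun x => (Y x - deriv (deriv Y) x) * W x)
          = fun x => Y x * W x - deriv (deriv Y) x * W x by ext x; ring]
      rw [intervalIntegral.integral_sub (f := fun x => Y x * W x) (g := fun x => deriv (deriv Y) x * W x)
        ((hY.continuous.mul hW.continuous).intervalIntegrable 0 1)
        ((hY''.continuous.mul hW.continuous).intervalIntegrable 0 1), h1]
      ring
    set P : ℝ → ℝ := fun x => Y x - deriv (deriv Y) x with hPdef
    have hP : ContDiff ℝ (∞ : WithTop ℕ∞) P := hY.sub hY''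
    have hPp : Function.Periodic P 1 := fun x => by
      simp only [P, hYp x, per_deriv' (per_deriv' hYp) x]
    have hPX : ContDiff ℝ (∞ : WithTop ℕ∞) (fun x => P x * X x) := hP.mul hX
    have hPXp : Function.Periodic (fun x => P x * X x) 1 := fun x => by
      simp only [hPp x, hXp x]
    have h2 : ∫ x in (0:ℝ)..1, deriv (fun x => P x * X x) x * Z x
        = -∫ x in (0:ℝ)..1, P x * X x * deriv Z x := by
      simpa [mul_assoc] using per_ibp' hPX hZ hPXp hZp
    have hder : ∀ x, deriv (fun x => P x * X x) x
        = (deriv Y x - deriv (deriv (deriv Y)) x) * X x + P x * deriv X x := by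
      intro x
      rw [deriv_fun_mul ((diffble hP) x) ((diffble hX) x)]
      have : deriv P x = deriv Y x - deriv (deriv (deriv Y)) x := by
        rw [hPdef, deriv_fun_sub ((diffble hY) x) ((diffble hY'') x)]
      rw [this]
    calc (∫ x in (0:ℝ)..1,
        (Y x * (deriv X x * Z x - X x * deriv Z x)
          + deriv Y x * deriv (fun t => deriv X t * Z t - X t * deriv Z t) x))
        = ∫ x in (0:ℝ)..1, P x * W x := step1
      _ = ∫ x in (0:ℝ)..1, (P x * deriv X x * Z x - P x * X x * deriv Z x) := by
          apply intervalIntegral.integral_congr; intro x _; simp only [W]; ring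
      _ = (∫ x in (0:ℝ)..1, P x * deriv X x * Z x)
            - ∫ x in (0:ℝ)..1, P x * X x * deriv Z x :=
          intervalIntegral.integral_sub
            ((((hP.mul hX').mul hZ).continuous).intervalIntegrable 0 1)
            ((((hP.mul hX).mul hZ').continuous).intervalIntegrable 0 1)
      _ = (∫ x in (0:ℝ)..1, P x * deriv X x * Z x)
            + ∫ x in (0:ℝ)..1, deriv (fun x => P x * X x) x * Z x := by
          rw [h2]; ring
      _ = ∫ x in (0:ℝ)..1, Z x *
          (2 * Y x * deriv X x + deriv Y x * X x
            - 2 * deriv (deriv Y) x * deriv X x - deriv (deriv (deriv Y)) x * X x) := by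
          rw [← intervalIntegral.integral_add (f := fun x => P x * deriv X x * Z x) (g := fun x => deriv (fun x => P x * X x) x * Z x)
            ((((hP.mul hX').mul hZ).continuous).intervalIntegrable 0 1)
            (((smooth_deriv' hPX).continuous.mul hZ.continuous).intervalIntegrable 0 1)]
          apply intervalIntegral.integral_congr; intro x _
          simp only [hder, P]; ring
  refine ⟨part1 X Y hX hY hXp hYp, part2 Y hY hYp, ?_⟩
  rw [part2 X hX hXp]
  apply intervalIntegral.integral_congr; intro x _; ring
end
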